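/- Let G be a graph with threshold assignment τ and suppose τ(v)=0 for some node v. Define τ' on G∖v by τ'(u)=τ(u)−1 if u∈N(v) and τ(u)≥1, and τ'(u)=τ(u) otherwise. Then the minimum timed target set sizes satisfy MTT(G,τ)=MTT(G∖v,τ'). -/

import Mathlib

/-!
Since `τ v = 0`, the vertex `v` is active from round 1 on, whatever the seeds. Restricting a
timed target set of `(G, τ)` to `G ∖ v` gives one of `(G ∖ v, τ')` of no larger size: a
neighbour of `v` loses at most the one active neighbour `v`, and its threshold drops by one
(unless it is already `0`). Conversely, a timed target set of `(G ∖ v, τ')` delayed by one round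
is one of `(G, τ)` of the same size: by then `v` is active and makes up for the lowered thresholds.
-/

open Finset
open scoped Classical

variable {V : Type*}

noncomputable def Qseq (G : SimpleGraph V) [Fintype V] (τ : V → ℕ) (S : ℕ → Finset V) :
    ℕ → Finset V
  | 0 => ∅
  | i + 1 => Finset.univ.filter fun v =>
      τ v ≤ (G.neighborFinset v ∩ (S i ∪ Qseq G τ S i)).card

def IsTTS (G : SimpleGraph V) [Fintype V] (τ : V → ℕ) (S : ℕ → Finset V) (k : ℕ) : Prop :=
  S k = ∅ ∧ Qseq G τ S k = Finset.univ

def ttsSize (S : ℕ → Finset V) (k : ℕ) : ℕ := ∑ i ∈ Finset.range (k + 1), (S i).card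

noncomputable def strictMaj (G : SimpleGraph V) [Fintype V] (v : V) : ℕ := (G.degree v + 2) / 2

noncomputable def npStep (G : SimpleGraph V) [Fintype V] (τ : V → ℕ) (A : Finset V) : Finset V :=
  Finset.univ.filter fun v => τ v ≤ (G.neighborFinset v ∩ A).card

def IsTS (G : SimpleGraph V) [Fintype V] (τ : V → ℕ) (S : Finset V) : Prop :=
  ∃ i : ℕ, (npStep G τ)^[i] S = Finset.univ

noncomputable def MTT (G : SimpleGraph V) [Fintype V] (τ : V → ℕ) : ℕ :=
  sInf {m | ∃ (S : ℕ → Finset V) (k : ℕ), IsTTS G τ S k ∧ ttsSize S k = m}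

theorem Nat.sInf_eq_sInf_of_forall_exists_le {P Q : Set ℕ}
    (hPQ : ∀ m ∈ P, ∃ n ∈ Q, n ≤ m) (hQP : ∀ n ∈ Q, ∃ m ∈ P, m ≤ n) : sInf P = sInf Q := by
  rcases P.eq_empty_or_nonempty with rfl | hP
  · have hQ : Q = ∅ := Set.eq_empty_of_forall_notMem fun n hn => by
      obtain ⟨m, hm, -⟩ := hQP n hn
      exact hm
    rw [hQ]
  obtain ⟨n, hnQ, hn⟩ := hPQ _ (Nat.sInf_mem hP)
  obtain ⟨m, hmP, hm⟩ := hQP _ (Nat.sInf_mem ⟨n, hnQ⟩)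
  exact le_antisymm ((Nat.sInf_le hmP).trans hm) ((Nat.sInf_le hnQ).trans hn)

lemma SimpleGraph.ncard_neighborSet_inter_eq_ncard_induce_add [Finite V] (G : SimpleGraph V)
    (v : V) (u : ({u | u ≠ v} : Set V)) (A : Set V) :
    (G.neighborSet u ∩ A).ncard =
      ((G.induce {u | u ≠ v}).neighborSet u ∩ Subtype.val ⁻¹' A).ncard +
        if G.Adj u v ∧ v ∈ A then 1 else 0 := by
  have himage : Subtype.val '' ((G.induce {u | u ≠ v}).neighborSet u ∩ Subtype.val ⁻¹' A) =
      (G.neighborSet u ∩ A) \ {v} := by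
    ext w
    by_cases hw : w = v <;> simp [hw]
  rw [← Set.ncard_image_of_injective _ Subtype.val_injective, himage]
  by_cases hvA : v ∈ G.neighborSet u ∩ A
  · rw [if_pos (by simpa using hvA), Set.ncard_sdiff_singleton_add_one hvA]
  · rw [Set.sdiff_singleton_eq_self hvA, if_neg (by simpa using hvA), add_zero]

section

variable [Fintype V] (G : SimpleGraph V) (τ : V → ℕ)

@[simp]
lemma Qseq_zero (S : ℕ → Finset V) : Qseq G τ S 0 = ∅ := rfl

-- Counting with `Set.ncard` frees the activation rule from the classical `Fintype` and
-- `DecidableEq` instances baked into `Qseq`, which differ from those found on `G.induce`.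
lemma mem_Qseq_succ (S : ℕ → Finset V) (i : ℕ) (w : V) :
    w ∈ Qseq G τ S (i + 1) ↔ τ w ≤ (G.neighborSet w ∩ (↑(S i) ∪ ↑(Qseq G τ S i))).ncard := by
  rw [← Finset.coe_union, ← G.coe_neighborFinset, ← Finset.coe_inter, Set.ncard_coe_finset]
  simp [Qseq]

variable (v : V)

noncomputable def deleteThreshold : ({u | u ≠ v} : Set V) → ℕ :=
  fun u => if G.Adj v ↑u ∧ 1 ≤ τ ↑u then τ ↑u - 1 else τ ↑u

noncomputable def delayedLift (S' : ℕ → Finset ({u | u ≠ v} : Set V)) : ℕ → Finset V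
  | 0 => ∅
  | i + 1 => (S' i).map (Function.Embedding.subtype _)

omit [Fintype V] in
lemma deleteThreshold_apply (u : ({u | u ≠ v} : Set V)) :
    deleteThreshold G τ v u = τ u - if G.Adj u v then 1 else 0 := by
  by_cases h : G.Adj u v <;> simp [deleteThreshold, h, G.adj_comm v u]
  omega

lemma subtype_Qseq_subset_Qseq_induce (S : ℕ → Finset V) (i : ℕ) :
    (Qseq G τ S i).subtype (· ∈ ({u | u ≠ v} : Set V)) ⊆
      Qseq (G.induce {u | u ≠ v}) (deleteThreshold G τ v)
        (fun j => (S j).subtype (· ∈ ({u | u ≠ v} : Set V))) i := by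
  induction i with
  | zero => simp [Finset.subtype_eq_empty]
  | succ i ih =>
    intro u hu
    rw [Finset.mem_subtype, mem_Qseq_succ, G.ncard_neighborSet_inter_eq_ncard_induce_add] at hu
    rw [mem_Qseq_succ, deleteThreshold_apply]
    have hsub : (G.induce {u | u ≠ v}).neighborSet u ∩ Subtype.val ⁻¹' (↑(S i) ∪ ↑(Qseq G τ S i)) ⊆
        (G.induce {u | u ≠ v}).neighborSet u ∩ (↑((S i).subtype (· ∈ ({u | u ≠ v} : Set V))) ∪
          ↑(Qseq (G.induce {u | u ≠ v}) (deleteThreshold G τ v)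
            (fun j => (S j).subtype (· ∈ ({u | u ≠ v} : Set V))) i)) := by
      rintro w ⟨hw, hS | hQ⟩
      · exact ⟨hw, Or.inl (Finset.mem_subtype.2 hS)⟩
      · exact ⟨hw, Or.inr (ih (Finset.mem_subtype.2 hQ))⟩
    have := Set.ncard_le_ncard hsub
    by_cases hadj : G.Adj u v
    · simp only [hadj, true_and, if_true] at hu ⊢
      split_ifs at hu <;> omega
    · simp only [hadj, false_and, if_false] at hu ⊢
      omega

variable {G τ}

lemma IsTTS.subtype {S : ℕ → Finset V} {k : ℕ} (hS : IsTTS G τ S k) :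
    IsTTS (G.induce {u | u ≠ v}) (deleteThreshold G τ v)
      (fun j => (S j).subtype (· ∈ ({u | u ≠ v} : Set V))) k := by
  refine ⟨by simp [hS.1, Finset.subtype_eq_empty], Finset.eq_univ_of_forall fun u => ?_⟩
  exact subtype_Qseq_subset_Qseq_induce G τ v S k (by simp [hS.2])

variable {v}

lemma mem_Qseq_delayedLift_succ_self (hv : τ v = 0) (S' : ℕ → Finset ({u | u ≠ v} : Set V))
    (i : ℕ) : v ∈ Qseq G τ (delayedLift v S') (i + 1) := by
  simp [mem_Qseq_succ, hv]

lemma mem_Qseq_delayedLift_succ (hv : τ v = 0) (S' : ℕ → Finset ({u | u ≠ v} : Set V))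
    (i : ℕ) (u : ({u | u ≠ v} : Set V))
    (hu : u ∈ Qseq (G.induce {u | u ≠ v}) (deleteThreshold G τ v) S' i) :
    ↑u ∈ Qseq G τ (delayedLift v S') (i + 1) := by
  induction i generalizing u with
  | zero => simp at hu
  | succ i ih =>
    rw [mem_Qseq_succ, deleteThreshold_apply] at hu
    rw [mem_Qseq_succ, G.ncard_neighborSet_inter_eq_ncard_induce_add]
    have hsub : (G.induce {u | u ≠ v}).neighborSet u ∩ (↑(S' i) ∪
          ↑(Qseq (G.induce {u | u ≠ v}) (deleteThreshold G τ v) S' i)) ⊆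
        (G.induce {u | u ≠ v}).neighborSet u ∩ Subtype.val ⁻¹'
          (↑(delayedLift v S' (i + 1)) ∪ ↑(Qseq G τ (delayedLift v S') (i + 1))) := by
      rintro w ⟨hw, hS | hQ⟩
      · exact ⟨hw, Or.inl (Finset.mem_map_of_mem _ hS)⟩
      · exact ⟨hw, Or.inr (ih w hQ)⟩
    have := Set.ncard_le_ncard hsub
    have hvQ : v ∈ Qseq G τ (delayedLift v S') (i + 1) :=
      mem_Qseq_delayedLift_succ_self hv S' i
    by_cases hadj : G.Adj u v
    · simp only [hadj, true_and, if_true, Set.mem_union, Finset.mem_coe, hvQ, or_true] at hu ⊢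
      omega
    · simp only [hadj, false_and, if_false] at hu ⊢
      omega

lemma IsTTS.delayedLift (hv : τ v = 0) {S' : ℕ → Finset ({u | u ≠ v} : Set V)} {k : ℕ}
    (hS' : IsTTS (G.induce {u | u ≠ v}) (deleteThreshold G τ v) S' k) :
    IsTTS G τ (delayedLift v S') (k + 1) := by
  refine ⟨by simp [_root_.delayedLift, hS'.1], Finset.eq_univ_of_forall fun w => ?_⟩
  by_cases hw : w = v
  · subst hw
    exact mem_Qseq_delayedLift_succ_self hv S' k
  · exact mem_Qseq_delayedLift_succ hv S' k ⟨w, hw⟩ (by simp [hS'.2])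

end

lemma ttsSize_subtype_le (p : V → Prop) [DecidablePred p] (S : ℕ → Finset V) (k : ℕ) :
    ttsSize (fun j => (S j).subtype p) k ≤ ttsSize S k :=
  Finset.sum_le_sum fun j _ => by
    rw [Finset.card_subtype]
    exact Finset.card_filter_le _ _

lemma ttsSize_delayedLift (v : V) (S' : ℕ → Finset ({u | u ≠ v} : Set V)) (k : ℕ) :
    ttsSize (delayedLift v S') (k + 1) = ttsSize S' k := by
  simp [ttsSize, Finset.sum_range_succ' _ (k + 1), delayedLift]

theorem stmt11_general [Fintype V] (G : SimpleGraph V) (τ : V → ℕ)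
    (v : V) (hv : τ v = 0) :
    MTT G τ =
      MTT (G.induce {u | u ≠ v})
        (fun u => if G.Adj v ↑u ∧ 1 ≤ τ ↑u then τ ↑u - 1 else τ ↑u) := by
  apply Nat.sInf_eq_sInf_of_forall_exists_le
  · rintro _ ⟨S, k, hS, rfl⟩
    exact ⟨_, ⟨_, k, hS.subtype v, rfl⟩, ttsSize_subtype_le _ S k⟩
  · rintro _ ⟨S', k, hS', rfl⟩
    exact ⟨_, ⟨_, k + 1, hS'.delayedLift hv, rfl⟩, (ttsSize_delayedLift v S' k).le⟩

/-- Lemma on zero-threshold removal: If `τ(v) = 0` for some node `v`, and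
`τ'` on `G ∖ v` lowers the threshold of the neighbors of `v` (with positive threshold) by
one and keeps all other thresholds, then `MTT(G, τ) = MTT(G ∖ v, τ')`. -/
theorem stmt11 [Fintype V] (G : SimpleGraph V) (τ : V → ℕ)
    (hτ : ∀ u, τ u ≤ G.degree u) (v : V) (hv : τ v = 0) :
    MTT G τ =
      MTT (G.induce {u | u ≠ v})
        (fun u => if G.Adj v ↑u ∧ 1 ≤ τ ↑u then τ ↑u - 1 else τ ↑u) :=
  stmt11_general G τ v hv
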